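/- arXiv:1411.0995 — 3 statements merged into one kernel-verified Lean document; each statement's English description precedes it below -/
import Mathlib

section
/- Let a, a′ ∈ ℂ be nonzero. Then there exists a ℂ-linear automorphism of ℂ⁵ mapping the Beloshapka model M(a,0) bijectively onto M(a′,0); in particular all models M(a,0) with a ≠ 0 are biholomorphically equivalent to one another. -/
/-!
The weighted dilations `z ↦ λ z`, `w₁ ↦ |λ|² w₁`, `(w₂, w₃) ↦ λ² λ̄ · (w₂, w₃)`, `w₄ ↦ c w₄`
(`λ ∈ ℂˣ`, `c ∈ ℝˣ`) form a group of linear automorphisms of `ℂ⁵`, and such a dilation maps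
`M(a, b)` onto `M(a', b')` as soon as `a' λ³ λ̄ = c a` and `b' |λ|⁴ = c b`. When `b = b' = 0`,
a square root `λ` of `a / a'` together with `c = |λ|²` solves these equations.
-/

open ComplexConjugate

noncomputable section

/-- The five-dimensional complex space `ℂ⁵` with coordinates `(z, w₁, w₂, w₃, w₄)`. -/
abbrev C5 : Type := ℂ × ℂ × ℂ × ℂ × ℂ

/-- Beloshapka's model `M(a,b) ⊆ ℂ⁵`. -/
def BModel (a : ℂ) (b : ℝ) : Set C5 :=
  {p | p.2.1.im = Complex.normSq p.1 ∧
       p.2.2.1.im = 2 * (p.1 ^ 2 * conj p.1).re ∧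
       p.2.2.2.1.im = 2 * (p.1 ^ 2 * conj p.1).im ∧
       p.2.2.2.2.im = 2 * (a * p.1 ^ 3 * conj p.1).re + b * Complex.normSq p.1 ^ 2}

/-- Biholomorphic equivalence of two models through local biholomorphisms fixing `0`. -/
def BiholEquiv (a : ℂ) (b : ℝ) (a' : ℂ) (b' : ℝ) : Prop :=
  ∃ (U V : Set C5) (Φ Ψ : C5 → C5),
    IsOpen U ∧ IsOpen V ∧ (0 : C5) ∈ U ∧ (0 : C5) ∈ V ∧
    DifferentiableOn ℂ Φ U ∧ DifferentiableOn ℂ Ψ V ∧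
    Φ 0 = 0 ∧ Set.MapsTo Φ U V ∧ Set.MapsTo Ψ V U ∧
    (∀ p ∈ U, Ψ (Φ p) = p) ∧ (∀ q ∈ V, Φ (Ψ q) = q) ∧
    Φ '' (BModel a b ∩ U) = BModel a' b' ∩ V

open Complex

-- `(Im w₂, Im w₃)` on the model is the complex number `2 z² z̄`, which `z ↦ λ z` multiplies by
-- `λ² λ̄`; the pair `(w₂, w₃)` is therefore mixed by the real matrix of that multiplication.
def weightedDilation (l : ℂ) (c : ℝ) : C5 →ₗ[ℂ] C5 where
  toFun p := (l * p.1, (normSq l : ℂ) * p.2.1,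
    ((l ^ 2 * conj l).re : ℂ) * p.2.2.1 - ((l ^ 2 * conj l).im : ℂ) * p.2.2.2.1,
    ((l ^ 2 * conj l).im : ℂ) * p.2.2.1 + ((l ^ 2 * conj l).re : ℂ) * p.2.2.2.1,
    (c : ℂ) * p.2.2.2.2)
  map_add' p q := by
    simp only [Prod.fst_add, Prod.snd_add, Prod.mk_add_mk]
    congr 1 <;> ring_nf
  map_smul' t p := by
    simp only [Prod.smul_fst, Prod.smul_snd, Prod.smul_mk, smul_eq_mul, RingHom.id_apply]
    congr 1 <;> ring_nf

lemma weightedDilation_apply (l : ℂ) (c : ℝ) (z w₁ w₂ w₃ w₄ : ℂ) :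
    weightedDilation l c (z, w₁, w₂, w₃, w₄) = (l * z, (normSq l : ℂ) * w₁,
      ((l ^ 2 * conj l).re : ℂ) * w₂ - ((l ^ 2 * conj l).im : ℂ) * w₃,
      ((l ^ 2 * conj l).im : ℂ) * w₂ + ((l ^ 2 * conj l).re : ℂ) * w₃, (c : ℂ) * w₄) :=
  rfl

lemma weightedDilation_comp (l l' : ℂ) (c c' : ℝ) :
    (weightedDilation l c).comp (weightedDilation l' c') = weightedDilation (l * l') (c * c') := by
  have hν : (l * l') ^ 2 * conj (l * l') = (l ^ 2 * conj l) * (l' ^ 2 * conj l') := by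
    rw [map_mul]; ring
  refine LinearMap.ext fun ⟨z, w₁, w₂, w₃, w₄⟩ => ?_
  simp only [LinearMap.comp_apply, weightedDilation_apply, hν, normSq_mul, mul_re, mul_im]
  push_cast
  refine Prod.ext ?_ (Prod.ext ?_ (Prod.ext ?_ (Prod.ext ?_ ?_))) <;> ring

lemma weightedDilation_one_one : weightedDilation 1 1 = LinearMap.id := by
  refine LinearMap.ext fun ⟨z, w₁, w₂, w₃, w₄⟩ => ?_
  simp [weightedDilation_apply]

def weightedDilationEquiv {l : ℂ} (hl : l ≠ 0) {c : ℝ} (hc : c ≠ 0) : C5 ≃ₗ[ℂ] C5 :=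
  LinearEquiv.ofLinearMap (weightedDilation l c) (weightedDilation l⁻¹ c⁻¹)
    (by rw [weightedDilation_comp, mul_inv_cancel₀ hl, mul_inv_cancel₀ hc,
      weightedDilation_one_one])
    (by rw [weightedDilation_comp, inv_mul_cancel₀ hl, inv_mul_cancel₀ hc,
      weightedDilation_one_one])

lemma mem_BModel_iff {a : ℂ} {b : ℝ} {p : C5} :
    p ∈ BModel a b ↔ p.2.1.im = normSq p.1 ∧
      (⟨p.2.2.1.im, p.2.2.2.1.im⟩ : ℂ) = 2 * (p.1 ^ 2 * conj p.1) ∧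
      p.2.2.2.2.im = 2 * (a * p.1 ^ 3 * conj p.1).re + b * normSq p.1 ^ 2 := by
  simp [BModel, Complex.ext_iff, and_assoc]

theorem weightedDilation_preimage_BModel {l : ℂ} (hl : l ≠ 0) {c : ℝ} (hc : c ≠ 0)
    {a a' : ℂ} {b b' : ℝ} (hab : a' * l ^ 3 * conj l = c * a) (hbb : b' * normSq l ^ 2 = c * b) :
    weightedDilation l c ⁻¹' BModel a' b' = BModel a b := by
  ext ⟨z, w₁, w₂, w₃, w₄⟩
  set ν := l ^ 2 * conj l with hν
  have hcubic : (l * z) ^ 2 * conj (l * z) = ν * (z ^ 2 * conj z) := by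
    rw [map_mul]; ring
  have hquartic : a' * (l * z) ^ 3 * conj (l * z) = c * (a * z ^ 3 * conj z) := by
    rw [map_mul]; linear_combination (z ^ 3 * conj z) * hab
  have hpair : (⟨((ν.re : ℂ) * w₂ - (ν.im : ℂ) * w₃).im,
      ((ν.im : ℂ) * w₂ + (ν.re : ℂ) * w₃).im⟩ : ℂ) = ν * ⟨w₂.im, w₃.im⟩ := by
    apply Complex.ext <;> simp only [sub_im, add_im, mul_im, mul_re, ofReal_re, ofReal_im] <;> ring
  have hquad : b' * normSq (l * z) ^ 2 = c * (b * normSq z ^ 2) := by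
    rw [normSq_mul]; linear_combination normSq z ^ 2 * hbb
  have hl2 : normSq l ≠ 0 := (normSq_pos.2 hl).ne'
  have hν0 : ν ≠ 0 := by simp [hν, hl]
  rw [Set.mem_preimage, weightedDilation_apply, mem_BModel_iff, mem_BModel_iff]
  dsimp only
  refine and_congr ?_ (and_congr ?_ ?_)
  · rw [im_ofReal_mul, normSq_mul, mul_right_inj' hl2]
  · rw [hpair, hcubic, mul_left_comm (2 : ℂ), mul_right_inj' hν0]
  · rw [im_ofReal_mul, hquartic, re_ofReal_mul, hquad, mul_left_comm (2 : ℝ), ← mul_add,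
      mul_right_inj' hc]

theorem weightedDilationEquiv_image_BModel {l : ℂ} (hl : l ≠ 0) {c : ℝ} (hc : c ≠ 0)
    {a a' : ℂ} {b b' : ℝ} (hab : a' * l ^ 3 * conj l = c * a) (hbb : b' * normSq l ^ 2 = c * b) :
    weightedDilationEquiv hl hc '' BModel a b = BModel a' b' := by
  rw [← weightedDilation_preimage_BModel hl hc hab hbb]
  exact Set.image_preimage_eq _ (weightedDilationEquiv hl hc).surjective

theorem biholEquiv_of_linearEquiv {a a' : ℂ} {b b' : ℝ} (Φ : C5 ≃ₗ[ℂ] C5)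
    (hΦ : Φ '' BModel a b = BModel a' b') : BiholEquiv a b a' b' := by
  have hdiff (e : C5 ≃ₗ[ℂ] C5) : DifferentiableOn ℂ e Set.univ :=
    (LinearMap.toContinuousLinearMap (e : C5 →ₗ[ℂ] C5)).differentiable.differentiableOn
  refine ⟨Set.univ, Set.univ, Φ, Φ.symm, isOpen_univ, isOpen_univ, trivial, trivial,
    hdiff Φ, hdiff Φ.symm, map_zero Φ, Set.mapsTo_univ _ _, Set.mapsTo_univ _ _,
    fun p _ => Φ.symm_apply_apply p, fun q _ => Φ.apply_symm_apply q, ?_⟩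
  rwa [Set.inter_univ, Set.inter_univ]

lemma exists_ne_zero_mul_pow_three_mul_conj_eq {a a' : ℂ} (ha : a ≠ 0) (ha' : a' ≠ 0) :
    ∃ l : ℂ, l ≠ 0 ∧ a' * l ^ 3 * conj l = (normSq l : ℂ) * a := by
  obtain ⟨l, hl⟩ := IsAlgClosed.exists_pow_nat_eq (a / a') two_pos
  refine ⟨l, ?_, ?_⟩
  · rintro rfl
    simp [eq_comm, ha, ha'] at hl
  · rw [normSq_eq_conj_mul_self, pow_succ, hl]
    field_simp

/-- for nonzero `a, a' ∈ ℂ` there is a `ℂ`-linear automorphism of `ℂ⁵`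
mapping `M(a,0)` bijectively onto `M(a',0)`; in particular `M(a,0)` and `M(a',0)`
are biholomorphically equivalent. -/
theorem beloshapka_b_zero_models_equivalent (a a' : ℂ) (ha : a ≠ 0) (ha' : a' ≠ 0) :
    (∃ Φ : C5 ≃ₗ[ℂ] C5, Φ '' BModel a 0 = BModel a' 0) ∧ BiholEquiv a 0 a' 0 := by
  obtain ⟨l, hl, hweight⟩ := exists_ne_zero_mul_pow_three_mul_conj_eq ha ha'
  have hc : normSq l ≠ 0 := (normSq_pos.2 hl).ne'
  have himage : weightedDilationEquiv hl hc '' BModel a 0 = BModel a' 0 :=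
    weightedDilationEquiv_image_BModel hl hc hweight (by simp)
  exact ⟨⟨_, himage⟩, biholEquiv_of_linearEquiv _ himage⟩
end
end

section
/- Let r > 0, θ ∈ ℝ, and b ∈ ℝ. The ℂ-linear automorphism Φ of ℂ⁵ defined by Φ(z, w₁, w₂, w₃, w₄) = (e^{−iθ/2}·z, w₁, cos(θ/2)·w₂ + sin(θ/2)·w₃, −sin(θ/2)·w₂ + cos(θ/2)·w₃, w₄) maps the Beloshapka model M(r, b) bijectively onto M(r·e^{iθ}, b). In particular, for every nonzero a ∈ ℂ and every b ∈ ℝ, the model M(a,b) is the image of M(|a|, b) under a ℂ-linear automorphism of ℂ⁵, so M(a,b) is biholomorphically equivalent to M(|a|, b). -/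
open ComplexConjugate

noncomputable section

/-- The explicit linear map
`Φ(z,w₁,w₂,w₃,w₄) = (e^{-iθ/2} z, w₁, cos(θ/2) w₂ + sin(θ/2) w₃,
-sin(θ/2) w₂ + cos(θ/2) w₃, w₄)`. -/
def rotMap (θ : ℝ) : C5 → C5 := fun p =>
  (Complex.exp (-(θ / 2 : ℝ) * Complex.I) * p.1,
   p.2.1,
   (Real.cos (θ / 2) : ℂ) * p.2.2.1 + (Real.sin (θ / 2) : ℂ) * p.2.2.2.1,
   -(Real.sin (θ / 2) : ℂ) * p.2.2.1 + (Real.cos (θ / 2) : ℂ) * p.2.2.2.1,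
   p.2.2.2.2)

/-!
Write `u = e^{-iθ/2}`, so `|u| = 1` and `u² e^{iθ} = 1`. The map sends `z ↦ u z` and, reading
`Im w₂ + i Im w₃` as one complex number, multiplies that number by `u` too. Since
`|u z|² = |z|²`, `(u z)² conj (u z) = u z² z̄` and `(u z)³ conj (u z) = u² z³ z̄`, every defining
equation of `M(a,b)` is carried to the corresponding equation of `M(a e^{iθ}, b)`. For the second
part take `θ = arg a`, so that `|a| e^{iθ} = a`; a linear automorphism is a global biholomorphism.
-/

open Complex

def imPair (p : C5) : ℂ := ⟨p.2.2.1.im, p.2.2.2.1.im⟩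

theorem mem_bModel_iff {a : ℂ} {b : ℝ} {p : C5} :
    p ∈ BModel a b ↔ p.2.1.im = normSq p.1 ∧ imPair p = 2 * (p.1 ^ 2 * conj p.1) ∧
      p.2.2.2.2.im = 2 * (a * p.1 ^ 3 * conj p.1).re + b * normSq p.1 ^ 2 := by
  simp [BModel, imPair, Complex.ext_iff, and_assoc]

theorem exp_neg_half_mul_I (θ : ℝ) :
    exp (-(θ / 2 : ℝ) * I) = Real.cos (θ / 2) - Real.sin (θ / 2) * I := by
  rw [← ofReal_neg, exp_mul_I, ← ofReal_cos, ← ofReal_sin, Real.cos_neg, Real.sin_neg,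
    ofReal_neg, neg_mul, sub_eq_add_neg]

theorem imPair_rotMap (θ : ℝ) (p : C5) :
    imPair (rotMap θ p) = exp (-(θ / 2 : ℝ) * I) * imPair p := by
  apply Complex.ext <;>
    simp only [imPair, rotMap, exp_neg_half_mul_I, add_im, mul_im, mul_re, sub_re, sub_im, neg_re,
      neg_im, ofReal_re, ofReal_im, I_re, I_im] <;> ring

theorem rotMap_neg_rotMap (θ : ℝ) (p : C5) : rotMap (-θ) (rotMap θ p) = p := by
  have hcs : (Real.sin (θ / 2) : ℂ) ^ 2 + (Real.cos (θ / 2) : ℂ) ^ 2 = 1 := by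
    exact_mod_cast Real.sin_sq_add_cos_sq _
  simp only [rotMap, exp_neg_half_mul_I]
  simp only [neg_div, Real.cos_neg, Real.sin_neg, ofReal_neg]
  ext <;> simp only
  · linear_combination p.1 * hcs - (Real.sin (θ / 2) : ℂ) ^ 2 * p.1 * I_sq
  · linear_combination p.2.2.1 * hcs
  · linear_combination p.2.2.2.1 * hcs

def rotEquiv (θ : ℝ) : C5 ≃ₗ[ℂ] C5 where
  toFun := rotMap θ
  invFun := rotMap (-θ)
  map_add' x y := by ext <;> simp only [rotMap, Prod.fst_add, Prod.snd_add] <;> ring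
  map_smul' c x := by
    ext <;> simp only [rotMap, Prod.smul_fst, Prod.smul_snd, smul_eq_mul, RingHom.id_apply] <;> ring
  left_inv := rotMap_neg_rotMap θ
  right_inv q := by simpa using rotMap_neg_rotMap (-θ) q

theorem rotMap_mem_bModel_iff (a : ℂ) (b θ : ℝ) (p : C5) :
    rotMap θ p ∈ BModel (a * exp (θ * I)) b ↔ p ∈ BModel a b := by
  set u := exp (-(θ / 2 : ℝ) * I) with hu_def
  have hu_normSq : normSq u = 1 := by
    rw [normSq_eq_norm_sq, hu_def, ← ofReal_neg, norm_exp_ofReal_mul_I, one_pow]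
  have hu : conj u * u = 1 := by rw [mul_comm, mul_conj, hu_normSq, ofReal_one]
  have hu_sq : exp (θ * I) * u ^ 2 = 1 := by
    rw [hu_def, ← exp_nat_mul, ← exp_add, ← exp_zero]; push_cast; ring_nf
  have hnormSq : normSq (u * p.1) = normSq p.1 := by rw [normSq_mul, hu_normSq, one_mul]
  have hcubic : (u * p.1) ^ 2 * conj (u * p.1) = u * (p.1 ^ 2 * conj p.1) := by
    rw [map_mul]; linear_combination u * p.1 ^ 2 * conj p.1 * hu
  have hquartic :
      a * exp (θ * I) * (u * p.1) ^ 3 * conj (u * p.1) = a * p.1 ^ 3 * conj p.1 := by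
    rw [map_mul]
    linear_combination a * p.1 ^ 3 * conj p.1 * (exp (θ * I) * u ^ 2 * hu + hu_sq)
  rw [mem_bModel_iff, mem_bModel_iff, imPair_rotMap]
  simp only [rotMap, ← hu_def, hnormSq, hcubic, hquartic, mul_left_comm (2 : ℂ) u]
  rw [mul_right_inj' (exp_ne_zero _ : u ≠ 0)]

theorem image_rotEquiv_bModel (a : ℂ) (b θ : ℝ) :
    rotEquiv θ '' BModel a b = BModel (a * exp (θ * I)) b := by
  ext q
  rw [LinearEquiv.image_eq_preimage_symm, Set.mem_preimage, ← rotMap_mem_bModel_iff a b θ]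
  change rotEquiv θ ((rotEquiv θ).symm q) ∈ _ ↔ _
  rw [LinearEquiv.apply_symm_apply]

theorem beloshapka_rotation_to_modulus_general (r : ℝ) (θ : ℝ) (b : ℝ) :
    (IsLinearMap ℂ (rotMap θ) ∧ Function.Bijective (rotMap θ) ∧
      rotMap θ '' BModel (r : ℂ) b = BModel ((r : ℂ) * Complex.exp ((θ : ℂ) * Complex.I)) b) ∧
    (∀ a : ℂ, a ≠ 0 → ∀ b' : ℝ,
      (∃ Φ : C5 ≃ₗ[ℂ] C5, Φ '' BModel ((‖a‖ : ℝ) : ℂ) b' = BModel a b') ∧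
      BiholEquiv ((‖a‖ : ℝ) : ℂ) b' a b') := by
  refine ⟨⟨(rotEquiv θ).toLinearMap.isLinear, (rotEquiv θ).bijective,
    image_rotEquiv_bModel _ b θ⟩, fun a _ b' => ?_⟩
  have h : rotEquiv a.arg '' BModel ((‖a‖ : ℝ) : ℂ) b' = BModel a b' := by
    rw [image_rotEquiv_bModel, norm_mul_exp_arg_mul_I]
  exact ⟨⟨rotEquiv a.arg, h⟩, biholEquiv_of_linearEquiv _ h⟩

/-- the `ℂ`-linear automorphism `rotMap θ` maps `M(r,b)` bijectively onto
`M(r·e^{iθ}, b)`; in particular every `M(a,b)` with `a ≠ 0` is the image of `M(|a|,b)`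
under a `ℂ`-linear automorphism of `ℂ⁵`, hence biholomorphically equivalent to it. -/
theorem beloshapka_rotation_to_modulus (r : ℝ) (hr : 0 < r) (θ : ℝ) (b : ℝ) :
    (IsLinearMap ℂ (rotMap θ) ∧ Function.Bijective (rotMap θ) ∧
      rotMap θ '' BModel (r : ℂ) b = BModel ((r : ℂ) * Complex.exp ((θ : ℂ) * Complex.I)) b) ∧
    (∀ a : ℂ, a ≠ 0 → ∀ b' : ℝ,
      (∃ Φ : C5 ≃ₗ[ℂ] C5, Φ '' BModel ((‖a‖ : ℝ) : ℂ) b' = BModel a b') ∧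
      BiholEquiv ((‖a‖ : ℝ) : ℂ) b' a b') :=
  beloshapka_rotation_to_modulus_general r θ b
end
end

section
/- Let a, a′ ∈ ℂ be nonzero and let b, b′ ∈ ℝ be nonzero, and suppose a·conj(a)/b² = a′·conj(a′)/b′². Then there exists a ℂ-linear automorphism of ℂ⁵ mapping the Beloshapka model M(a,b) bijectively onto M(a′,b′). -/
/-!
Scaling `z` by a unimodular `l` multiplies `z² z̄` by `l` and `z³ z̄` by `l²`. So if `(w₂, w₃)` is
turned by the angle of `l` and `w₄` is scaled by `t = b'/b`, the linear map sends `M(a, b)` onto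
`M(a', b')` as soon as `a' l² = t a`. A unimodular square root `l` of `t a / a'` exists exactly
when `|a|² / b² = |a'|² / b'²`.
-/

open ComplexConjugate

noncomputable section

namespace BModel

def rescaling (l : ℂ) (t : ℝ) : C5 →ₗ[ℂ] C5 where
  toFun p :=
    (l * p.1, p.2.1,
     l.re * p.2.2.1 - l.im * p.2.2.2.1,
     l.im * p.2.2.1 + l.re * p.2.2.2.1,
     t * p.2.2.2.2)
  map_add' := by
    rintro ⟨z, w₁, w₂, w₃, w₄⟩ ⟨z', w₁', w₂', w₃', w₄'⟩
    simp only [Prod.mk_add_mk, Prod.mk.injEq]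
    refine ⟨by ring, trivial, by ring, by ring, by ring⟩
  map_smul' := by
    rintro c ⟨z, w₁, w₂, w₃, w₄⟩
    simp only [Prod.smul_mk, smul_eq_mul, RingHom.id_apply, Prod.mk.injEq]
    refine ⟨by ring, trivial, by ring, by ring, by ring⟩

lemma rescaling_conj_inv_comp {l : ℂ} {t : ℝ} (hl : Complex.normSq l = 1) (ht : t ≠ 0) :
    rescaling (conj l) t⁻¹ ∘ₗ rescaling l t = LinearMap.id := by
  have hlc : conj l * l = 1 := by rw [mul_comm, Complex.mul_conj, hl, Complex.ofReal_one]
  have hri : (l.re : ℂ) ^ 2 + (l.im : ℂ) ^ 2 = 1 := by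
    rw [Complex.normSq_apply] at hl
    exact_mod_cast (by linear_combination hl : l.re ^ 2 + l.im ^ 2 = 1)
  have htC : ((t⁻¹ : ℝ) : ℂ) * t = 1 := by
    rw [Complex.ofReal_inv]; exact inv_mul_cancel₀ (Complex.ofReal_ne_zero.2 ht)
  refine LinearMap.ext fun ⟨z, w₁, w₂, w₃, w₄⟩ => ?_
  simp only [LinearMap.comp_apply, LinearMap.id_apply, rescaling, LinearMap.coe_mk,
    AddHom.coe_mk, Complex.conj_re, Complex.conj_im, Complex.ofReal_neg, Prod.mk.injEq]
  exact ⟨by linear_combination z * hlc, trivial, by linear_combination w₂ * hri,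
    by linear_combination w₃ * hri, by linear_combination w₄ * htC⟩

def rescalingEquiv {l : ℂ} {t : ℝ} (hl : Complex.normSq l = 1) (ht : t ≠ 0) : C5 ≃ₗ[ℂ] C5 :=
  .ofLinearMap (rescaling l t) (rescaling (conj l) t⁻¹)
    (by simpa using rescaling_conj_inv_comp (l := conj l) (by simpa using hl) (inv_ne_zero ht))
    (rescaling_conj_inv_comp hl ht)

lemma rescaling_mapsTo {a a' l : ℂ} {b b' t : ℝ} (hl : Complex.normSq l = 1)
    (ha : a' * l ^ 2 = t * a) (hb : b' = t * b) :
    Set.MapsTo (rescaling l t) (BModel a b) (BModel a' b') := by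
  rintro ⟨z, w₁, w₂, w₃, w₄⟩ ⟨h₁, h₂, h₃, h₄⟩
  have hlc : l * conj l = 1 := by rw [Complex.mul_conj, hl, Complex.ofReal_one]
  have hcubic : (l * z) ^ 2 * conj (l * z) = l * (z ^ 2 * conj z) := by
    rw [map_mul]; linear_combination l * z ^ 2 * conj z * hlc
  have hquartic : a' * (l * z) ^ 3 * conj (l * z) = t * (a * z ^ 3 * conj z) := by
    rw [map_mul]; linear_combination a' * l ^ 2 * z ^ 3 * conj z * hlc + z ^ 3 * conj z * ha
  dsimp only at h₁ h₂ h₃ h₄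
  simp only [BModel, rescaling, LinearMap.coe_mk, AddHom.coe_mk, Set.mem_ofPred_eq, hcubic,
    hquartic, Complex.normSq_mul, hl, one_mul]
  generalize z ^ 2 * conj z = ζ at h₂ h₃ ⊢
  generalize a * z ^ 3 * conj z = ξ at h₄ ⊢
  simp only [Complex.sub_im, Complex.add_im, Complex.mul_im, Complex.mul_re, Complex.ofReal_re,
    Complex.ofReal_im, zero_mul, add_zero, sub_zero]
  exact ⟨h₁, by linear_combination l.re * h₂ - l.im * h₃,
    by linear_combination l.im * h₂ + l.re * h₃,
    by linear_combination t * h₄ - Complex.normSq z ^ 2 * hb⟩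

-- The inverse `rescaling (conj l) t⁻¹` satisfies the same relations with `(a, b)` and `(a', b')`
-- exchanged.
lemma image_rescalingEquiv {a a' l : ℂ} {b b' t : ℝ} (hl : Complex.normSq l = 1) (ht : t ≠ 0)
    (ha : a' * l ^ 2 = t * a) (hb : b' = t * b) :
    rescalingEquiv hl ht '' BModel a b = BModel a' b' := by
  have hlc : l * conj l = 1 := by rw [Complex.mul_conj, hl, Complex.ofReal_one]
  have htC : (t : ℂ) ≠ 0 := Complex.ofReal_ne_zero.2 ht
  have ha_inv : a * conj l ^ 2 = ((t⁻¹ : ℝ) : ℂ) * a' := by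
    rw [Complex.ofReal_inv, eq_inv_mul_iff_mul_eq₀ htC]
    linear_combination -conj l ^ 2 * ha + a' * (l * conj l + 1) * hlc
  have hb_inv : b = t⁻¹ * b' := by rw [hb, inv_mul_cancel_left₀ ht]
  refine (rescaling_mapsTo hl ha hb).image_subset.antisymm fun q hq =>
    ⟨_, ?_, (rescalingEquiv hl ht).apply_symm_apply q⟩
  exact rescaling_mapsTo (by simpa using hl) ha_inv hb_inv hq

end BModel

theorem beloshapka_linear_equivalence_of_equal_invariants_general (a a' : ℂ) (b b' : ℝ)
    (ha' : a' ≠ 0) (hb : b ≠ 0) (hb' : b' ≠ 0)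
    (h : a * conj a / (b : ℂ) ^ 2 = a' * conj a' / (b' : ℂ) ^ 2) :
    ∃ Φ : C5 ≃ₗ[ℂ] C5, Φ '' BModel a b = BModel a' b' := by
  set t : ℝ := b' / b
  have ht : t ≠ 0 := div_ne_zero hb' hb
  obtain ⟨l, hl⟩ := IsAlgClosed.exists_pow_nat_eq (t * a / a') two_pos
  have hunit : Complex.normSq (t * a / a') = 1 := by
    rw [Complex.mul_conj, Complex.mul_conj] at h
    have hreal : Complex.normSq a / b ^ 2 = Complex.normSq a' / b' ^ 2 := by exact_mod_cast h
    rw [Complex.normSq_div, Complex.normSq_mul, Complex.normSq_ofReal, div_eq_one_iff_eq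
      (Complex.normSq_pos.2 ha').ne']
    simp only [t]
    field_simp at hreal ⊢
    linear_combination hreal
  have hnl : Complex.normSq l = 1 := by
    rw [← pow_eq_one_iff_of_nonneg (Complex.normSq_nonneg l) two_ne_zero, ← map_pow, hl, hunit]
  have ha'l : a' * l ^ 2 = t * a := by rw [hl]; field_simp
  exact ⟨_, BModel.image_rescalingEquiv hnl ht ha'l (div_mul_cancel₀ b' hb).symm⟩

/-- if `a, a'` are nonzero complex numbers and `b, b'` nonzero reals with
`a·conj a / b² = a'·conj a' / b'²`, then some `ℂ`-linear automorphism of `ℂ⁵` maps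
`M(a,b)` bijectively onto `M(a',b')`. -/
theorem beloshapka_linear_equivalence_of_equal_invariants (a a' : ℂ) (b b' : ℝ)
    (ha : a ≠ 0) (ha' : a' ≠ 0) (hb : b ≠ 0) (hb' : b' ≠ 0)
    (h : a * conj a / (b : ℂ) ^ 2 = a' * conj a' / (b' : ℂ) ^ 2) :
    ∃ Φ : C5 ≃ₗ[ℂ] C5, Φ '' BModel a b = BModel a' b' :=
  beloshapka_linear_equivalence_of_equal_invariants_general a a' b b' ha' hb hb' h
end
end
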